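/- Suppose m = d and the diffusion coefficient a = σσ' is uniformly elliptic. Then for every T > 0 and x ∈ C([-τ,T],ℝ^d), I_T(x) = J_T(x), where J_T(x) = ∫₀ᵀ Λ(x_s, ẋ(s)) ds if x is absolutely continuous on [0,T] with ẋ ∈ L¹([0,T],ℝ^d) its a.e. derivative (with the convention J_T(x) = ∞ when s ↦ Λ(x_s,ẋ(s)) is not integrable), J_T(x) = ∞ if x is not absolutely continuous on [0,T], and Λ(φ,ν) = (1/2)(b(φ) − ν)' (a(φ))⁻¹ (b(φ) − ν) for (φ,ν) ∈ 𝐂 × ℝ^d. -/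

import Mathlib

open MeasureTheory Set Metric
open scoped ENNReal

noncomputable section

/-- `ℝ^d`. -/
abbrev Vec (d : ℕ) := EuclideanSpace ℝ (Fin d)

/-- The state space `𝐂 = C([-τ,0],ℝ^d)`. -/
abbrev Hist (τ : ℝ) (d : ℕ) := C(Icc (-τ) (0:ℝ), Vec d)

/-- The path space `C([-τ,T],ℝ^d)`. -/
abbrev Traj (τ T : ℝ) (d : ℕ) := C(Icc (-τ) T, Vec d)

/-- Matrix acting on a vector. -/
def matVec {d m : ℕ} (M : Matrix (Fin d) (Fin m) ℝ) (v : Vec m) : Vec d :=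
  WithLp.toLp 2 (fun i => ∑ j, M i j * v j)

/-- Squared Frobenius norm of a matrix. -/
def frobSq {d m : ℕ} (M : Matrix (Fin d) (Fin m) ℝ) : ℝ := ∑ i, ∑ j, (M i j) ^ 2

/-- Frobenius norm of a matrix. -/
def frobNorm {d m : ℕ} (M : Matrix (Fin d) (Fin m) ℝ) : ℝ := Real.sqrt (frobSq M)

/-- Evaluation of a path at a time `t ∈ [-τ,T]` (clamped). -/
def ev {d : ℕ} {τ T : ℝ} (h : -τ ≤ T) (x : Traj τ T d) (t : ℝ) : Vec d :=
  x (projIcc (-τ) T h t)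

/-- The history segment `x_t ∈ 𝐂` of a path `x ∈ C([-τ,T],ℝ^d)`, for `t ∈ [0,T]`. -/
def seg {d : ℕ} {τ T : ℝ} (h : -τ ≤ T) (x : Traj τ T d) (t : ℝ) : Hist τ d :=
  ⟨fun s => x (projIcc (-τ) T h (t + s.1)),
    x.continuous.comp <| continuous_projIcc.comp <| continuous_const.add continuous_subtype_val⟩

/-- The uniform Lipschitz assumption on the coefficients:
`|b(φ)−b(ψ)|² + |σ(φ)−σ(ψ)|² ≤ κ₁ ‖φ−ψ‖²`. -/
def LipCoeff {d m : ℕ} {τ : ℝ} (b : Hist τ d → Vec d)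
    (σ' : Hist τ d → Matrix (Fin d) (Fin m) ℝ) (κ₁ : ℝ) : Prop :=
  ∀ φ ψ : Hist τ d, ‖b φ - b ψ‖ ^ 2 + frobSq (σ' φ - σ' ψ) ≤ κ₁ * ‖φ - ψ‖ ^ 2

/-- The linear growth bound `|b(φ)|² + |σ(φ)|² ≤ κ₂ (1 + ‖φ‖²)`. -/
def GrowthCoeff {d m : ℕ} {τ : ℝ} (b : Hist τ d → Vec d)
    (σ' : Hist τ d → Matrix (Fin d) (Fin m) ℝ) (κ₂ : ℝ) : Prop :=
  ∀ φ : Hist τ d, ‖b φ‖ ^ 2 + frobSq (σ' φ) ≤ κ₂ * (1 + ‖φ‖ ^ 2)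

/-- The set `U_T(x)` of controls `u ∈ L²([0,T],ℝ^m)` satisfying
`x(t) = x(0) + ∫₀ᵗ b(x_s) ds + ∫₀ᵗ σ(x_s) u(s) ds` for `t ∈ [0,T]`. -/
def controls {d m : ℕ} {τ T : ℝ} (h : -τ ≤ T) (b : Hist τ d → Vec d)
    (σ' : Hist τ d → Matrix (Fin d) (Fin m) ℝ) (x : Traj τ T d) : Set (ℝ → Vec m) :=
  {u | MemLp u 2 (volume.restrict (Icc 0 T)) ∧
    ∀ t ∈ Icc (0:ℝ) T,
      ev h x t = ev h x 0 + (∫ s in (0:ℝ)..t, b (seg h x s)) +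
        ∫ s in (0:ℝ)..t, matVec (σ' (seg h x s)) (u s)}

/-- The rate function `I_T(x) = inf_{u ∈ U_T(x)} ½∫₀ᵀ |u(s)|² ds` (with value `∞` if
`U_T(x) = ∅`). -/
def rate {d m : ℕ} {τ T : ℝ} (h : -τ ≤ T) (b : Hist τ d → Vec d)
    (σ' : Hist τ d → Matrix (Fin d) (Fin m) ℝ) (x : Traj τ T d) : ℝ≥0∞ :=
  ⨅ (u : ℝ → Vec m) (_ : u ∈ controls h b σ' x),
    ENNReal.ofReal ((1/2) * ∫ s in (0:ℝ)..T, ‖u s‖ ^ 2)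

open Classical in
/-- The rate function `I_T^φ(x)`, which is `I_T(x)` if `x₀ = φ` and `∞` otherwise. -/
def rateAt {d m : ℕ} {τ T : ℝ} (h : -τ ≤ T) (b : Hist τ d → Vec d)
    (σ' : Hist τ d → Matrix (Fin d) (Fin m) ℝ) (φ : Hist τ d) (x : Traj τ T d) : ℝ≥0∞ :=
  if seg h x 0 = φ then rate h b σ' x else ⊤

/-- Uniform ellipticity of `a = σσ'`: `ν' a(φ) ν ≥ c |ν|²`. -/
def UnifElliptic {d : ℕ} {τ : ℝ} (σ' : Hist τ d → Matrix (Fin d) (Fin d) ℝ) (c : ℝ) : Prop :=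
  ∀ (φ : Hist τ d) (ν : Fin d → ℝ),
    c * (∑ i, ν i ^ 2) ≤ dotProduct ν ((σ' φ * Matrix.transpose (σ' φ)).mulVec ν)

/-- The Lagrangian `Λ(φ,ν) = ½ (b(φ)−ν)' (a(φ))⁻¹ (b(φ)−ν)`, where `a = σσ'`. -/
def lagrangian {d : ℕ} {τ : ℝ} (b : Hist τ d → Vec d)
    (σ' : Hist τ d → Matrix (Fin d) (Fin d) ℝ) (φ : Hist τ d) (ν : Vec d) : ℝ :=
  (1/2) * dotProduct (fun i => b φ i - ν i)
    ((σ' φ * Matrix.transpose (σ' φ))⁻¹.mulVec (fun i => b φ i - ν i))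

/-- `J_T(x) = ∫₀ᵀ Λ(x_s, ẋ(s)) ds` if `x` is absolutely continuous on `[0,T]` (with derivative
`ẋ ∈ L¹([0,T],ℝ^d)`), and `∞` otherwise; the inner lower integral is `∞` when
`s ↦ Λ(x_s,ẋ(s))` is not integrable. -/
def Jrate {d : ℕ} {τ T : ℝ} (h : -τ ≤ T) (b : Hist τ d → Vec d)
    (σ' : Hist τ d → Matrix (Fin d) (Fin d) ℝ) (x : Traj τ T d) : ℝ≥0∞ :=
  ⨅ (x' : ℝ → Vec d) (_ : IntegrableOn x' (Icc 0 T) volume ∧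
      ∀ t ∈ Icc (0:ℝ) T, ev h x t = ev h x 0 + ∫ s in (0:ℝ)..t, x' s),
    ∫⁻ s in Icc (0:ℝ) T, ENNReal.ofReal (lagrangian b σ' (seg h x s) (x' s))

/-! Because `σ(x_s)` is invertible, `u ↦ b(x_·) + σ(x_·) u` maps `U_T(x)` onto the admissible
derivatives `ẋ` of `x`, with inverse `ẋ ↦ σ(x_·)⁻¹ (ẋ − b(x_·))`. Writing `(σσ')⁻¹ = σ'⁻¹ σ⁻¹`,
the Lagrangian is `Λ(φ, ν) = ½ |σ(φ)⁻¹ (ν − b(φ))|²`, so along corresponding pairs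
`Λ(x_s, ẋ(s)) = ½ |u(s)|²` and both infima run over the same values. -/

theorem LipschitzWith.of_dist_sq_le {X Y : Type*} [PseudoMetricSpace X] [PseudoMetricSpace Y]
    {f : X → Y} {κ : ℝ} (hf : ∀ x y, dist (f x) (f y) ^ 2 ≤ κ * dist x y ^ 2) :
    LipschitzWith (Real.toNNReal √κ) f :=
  LipschitzWith.of_dist_le_mul fun x y => by
    rw [Real.coe_toNNReal _ (Real.sqrt_nonneg _)]
    simpa [Real.sqrt_mul' _ (sq_nonneg _), Real.sqrt_sq dist_nonneg] using
      Real.sqrt_le_sqrt (hf x y)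

theorem frobSq_nonneg {d m : ℕ} (M : Matrix (Fin d) (Fin m) ℝ) : 0 ≤ frobSq M := by
  unfold frobSq; positivity

theorem sq_apply_le_frobSq {d m : ℕ} (M : Matrix (Fin d) (Fin m) ℝ) (i : Fin d) (j : Fin m) :
    M i j ^ 2 ≤ frobSq M :=
  calc M i j ^ 2 ≤ ∑ j', M i j' ^ 2 :=
        Finset.single_le_sum (fun _ _ => sq_nonneg _) (Finset.mem_univ j)
    _ ≤ frobSq M :=
        Finset.single_le_sum (f := fun i' => ∑ j', M i' j' ^ 2) (fun _ _ => by positivity)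
          (Finset.mem_univ i)

namespace LipCoeff

variable {d m : ℕ} {τ : ℝ} {b : Hist τ d → Vec d} {σ' : Hist τ d → Matrix (Fin d) (Fin m) ℝ}
  {κ₁ : ℝ}

theorem continuous_drift (hlip : LipCoeff b σ' κ₁) : Continuous b :=
  (LipschitzWith.of_dist_sq_le (κ := κ₁) fun φ ψ => by
    simpa only [dist_eq_norm] using
      (le_add_of_nonneg_right (frobSq_nonneg _)).trans (hlip φ ψ)).continuous

theorem continuous_diffusion (hlip : LipCoeff b σ' κ₁) : Continuous σ' :=
  continuous_matrix fun i j => (LipschitzWith.of_dist_sq_le (κ := κ₁) fun φ ψ => by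
    rw [Real.dist_eq, sq_abs, dist_eq_norm, ← Matrix.sub_apply]
    exact (sq_apply_le_frobSq _ i j).trans
      ((le_add_of_nonneg_left (sq_nonneg _)).trans (hlip φ ψ))).continuous

end LipCoeff

theorem UnifElliptic.isUnit_det {d : ℕ} {τ : ℝ} {σ' : Hist τ d → Matrix (Fin d) (Fin d) ℝ}
    {c : ℝ} (hell : UnifElliptic σ' c) (hc : 0 < c) (φ : Hist τ d) : IsUnit (σ' φ).det := by
  rw [isUnit_iff_ne_zero, ← Matrix.det_transpose]
  intro hdet
  obtain ⟨v, hv, hσv⟩ := Matrix.exists_mulVec_eq_zero_iff.2 hdet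
  have hquad := hell φ v
  rw [← Matrix.mulVec_mulVec, hσv, Matrix.mulVec_zero, dotProduct_zero] at hquad
  have hsum : ∑ i, v i ^ 2 = 0 := le_antisymm (by nlinarith) (by positivity)
  exact hv (dotProduct_self_eq_zero.1 (by simpa [dotProduct, sq] using hsum))

section MatVec

variable {d : ℕ}

theorem matVec_eq_toEuclideanCLM (M : Matrix (Fin d) (Fin d) ℝ) (v : Vec d) :
    matVec M v = Matrix.toEuclideanCLM (𝕜 := ℝ) M v := rfl

theorem matVec_matVec (M N : Matrix (Fin d) (Fin d) ℝ) (v : Vec d) :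
    matVec M (matVec N v) = matVec (M * N) v := by
  simp only [matVec_eq_toEuclideanCLM, map_mul]; rfl

theorem matVec_one (v : Vec d) : matVec 1 v = v := by
  rw [matVec_eq_toEuclideanCLM, map_one]; rfl

theorem matVec_inv_matVec {S : Matrix (Fin d) (Fin d) ℝ} (hS : IsUnit S.det) (v : Vec d) :
    matVec S⁻¹ (matVec S v) = v := by
  rw [matVec_matVec, Matrix.nonsing_inv_mul _ hS, matVec_one]

theorem matVec_matVec_inv {S : Matrix (Fin d) (Fin d) ℝ} (hS : IsUnit S.det) (v : Vec d) :
    matVec S (matVec S⁻¹ v) = v := by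
  rw [matVec_matVec, Matrix.mul_nonsing_inv _ hS, matVec_one]

-- No invertibility is needed: `Matrix.mul_inv_rev` and `Matrix.transpose_nonsing_inv` hold for
-- Mathlib's inverse of every square matrix.
theorem lagrangian_eq_half_norm_sq {τ : ℝ} {b : Hist τ d → Vec d}
    {σ' : Hist τ d → Matrix (Fin d) (Fin d) ℝ} (φ : Hist τ d) (ν : Vec d) :
    lagrangian b σ' φ ν = 1 / 2 * ‖matVec (σ' φ)⁻¹ (ν - b φ)‖ ^ 2 := by
  have hneg : matVec (σ' φ)⁻¹ (ν - b φ) = -matVec (σ' φ)⁻¹ (b φ - ν) := by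
    rw [matVec_eq_toEuclideanCLM, matVec_eq_toEuclideanCLM, ← map_neg, neg_sub]
  rw [lagrangian, hneg, norm_neg, EuclideanSpace.real_norm_sq_eq, Matrix.mul_inv_rev,
    ← Matrix.mulVec_mulVec, ← Matrix.transpose_nonsing_inv, Matrix.dotProduct_mulVec,
    Matrix.vecMul_transpose]
  simp [dotProduct, sq, matVec, Matrix.mulVec]

theorem lagrangian_add_matVec {τ : ℝ} {b : Hist τ d → Vec d}
    {σ' : Hist τ d → Matrix (Fin d) (Fin d) ℝ} {φ : Hist τ d} (hφ : IsUnit (σ' φ).det)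
    (u : Vec d) : lagrangian b σ' φ (b φ + matVec (σ' φ) u) = 1 / 2 * ‖u‖ ^ 2 := by
  rw [lagrangian_eq_half_norm_sq, add_sub_cancel_left, matVec_inv_matVec hφ]

end MatVec

section Integrability

variable {E : Type*} [NormedAddCommGroup E]

theorem MeasureTheory.AEStronglyMeasurable.clm_apply_of_continuous [NormedSpace ℝ E]
    {F : Type*} [NormedAddCommGroup F] [NormedSpace ℝ F] {μ : Measure ℝ} {L : ℝ → E →L[ℝ] F}
    (hL : Continuous L) {u : ℝ → E} (hu : AEStronglyMeasurable u μ) :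
    AEStronglyMeasurable (fun s => L s (u s)) μ :=
  Continuous.comp_aestronglyMeasurable₂ (g := fun (A : E →L[ℝ] F) v => A v)
    (continuous_fst.clm_apply continuous_snd) hL.aestronglyMeasurable hu

theorem MeasureTheory.IntegrableOn.clm_apply_of_continuous [NormedSpace ℝ E]
    {F : Type*} [NormedAddCommGroup F] [NormedSpace ℝ F] {K : Set ℝ} (hK : IsCompact K)
    {L : ℝ → E →L[ℝ] F} (hL : Continuous L) {u : ℝ → E} (hu : IntegrableOn u K) :
    IntegrableOn (fun s => L s (u s)) K := by
  obtain ⟨C, hC⟩ := hK.exists_bound_of_continuousOn hL.continuousOn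
  refine (hu.norm.const_mul C).mono' (hu.1.clm_apply_of_continuous hL)
    ((ae_restrict_mem hK.measurableSet).mono fun s hs => ?_)
  exact (L s).le_of_opNorm_le (hC s hs) (u s)

theorem memLp_two_of_lintegral_half_norm_sq_ne_top {α : Type*} [MeasurableSpace α]
    {μ : Measure α} {u : α → E} (hu : AEStronglyMeasurable u μ)
    (hfin : ∫⁻ s, ENNReal.ofReal (1 / 2 * ‖u s‖ ^ 2) ∂μ ≠ ⊤) : MemLp u 2 μ := by
  have hhalf : Integrable (fun s => 1 / 2 * ‖u s‖ ^ 2) μ :=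
    ⟨(hu.norm.pow 2).const_mul _,
      (hasFiniteIntegral_iff_ofReal (ae_of_all _ fun s => by positivity)).2 hfin.lt_top⟩
  refine (memLp_two_iff_integrable_sq_norm hu).2 ?_
  simpa using hhalf.const_mul 2

theorem ofReal_half_intervalIntegral_norm_sq {T : ℝ} (hT : 0 ≤ T) {u : ℝ → E}
    (hu : MemLp u 2 (volume.restrict (Icc 0 T))) :
    ENNReal.ofReal (1 / 2 * ∫ s in (0:ℝ)..T, ‖u s‖ ^ 2) =
      ∫⁻ s in Icc (0:ℝ) T, ENNReal.ofReal (1 / 2 * ‖u s‖ ^ 2) := by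
  rw [intervalIntegral.integral_of_le hT, ← integral_Icc_eq_integral_Ioc, ← integral_const_mul]
  exact ofReal_integral_eq_lintegral_ofReal
    (((memLp_two_iff_integrable_sq_norm hu.1).1 hu).const_mul _)
    (ae_of_all _ fun s => by positivity)

theorem intervalIntegral_add_of_integrableOn_Icc [NormedSpace ℝ E] {f g : ℝ → E} {T t : ℝ}
    (hf : IntegrableOn f (Icc 0 T)) (hg : IntegrableOn g (Icc 0 T)) (ht : t ∈ Icc 0 T) :
    ∫ s in (0:ℝ)..t, (f s + g s) = (∫ s in (0:ℝ)..t, f s) + ∫ s in (0:ℝ)..t, g s := by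
  have hsub : uIcc 0 t ⊆ Icc 0 T := by
    rw [uIcc_of_le ht.1]; exact Icc_subset_Icc_right ht.2
  exact intervalIntegral.integral_add (hf.mono_set hsub).intervalIntegrable
    (hg.mono_set hsub).intervalIntegrable

end Integrability

section MatrixFunctions

variable {d : ℕ} {A : ℝ → Matrix (Fin d) (Fin d) ℝ}

theorem continuous_toEuclideanCLM : Continuous (Matrix.toEuclideanCLM (𝕜 := ℝ) (n := Fin d)) :=
  LinearMap.continuous_of_finiteDimensional
    (Matrix.toEuclideanCLM (𝕜 := ℝ) (n := Fin d)).toAlgEquiv.toLinearMap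

theorem Continuous.matrix_inv_of_isUnit_det (hA : Continuous A) (hdet : ∀ s, IsUnit (A s).det) :
    Continuous fun s => (A s)⁻¹ :=
  continuous_iff_continuousAt.2 fun s => (continuousAt_matrix_inv _
    (by simpa using NormedRing.inverse_continuousAt (hdet s).unit)).comp hA.continuousAt

theorem MeasureTheory.AEStronglyMeasurable.matVec (hA : Continuous A) {μ : Measure ℝ}
    {u : ℝ → Vec d} (hu : AEStronglyMeasurable u μ) :
    AEStronglyMeasurable (fun s => matVec (A s) (u s)) μ :=
  hu.clm_apply_of_continuous (continuous_toEuclideanCLM.comp hA)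

theorem MeasureTheory.IntegrableOn.matVec (hA : Continuous A) {K : Set ℝ} (hK : IsCompact K)
    {u : ℝ → Vec d} (hu : IntegrableOn u K) : IntegrableOn (fun s => matVec (A s) (u s)) K :=
  hu.clm_apply_of_continuous hK (continuous_toEuclideanCLM.comp hA)

end MatrixFunctions

theorem continuous_seg {d : ℕ} {τ T : ℝ} (h : -τ ≤ T) (x : Traj τ T d) :
    Continuous (seg h x) := by
  let F : C(ℝ × Icc (-τ) (0:ℝ), Vec d) :=
    ⟨fun p => x (projIcc (-τ) T h (p.1 + p.2.1)),
      x.continuous.comp <| continuous_projIcc.comp <|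
        continuous_fst.add (continuous_subtype_val.comp continuous_snd)⟩
  exact F.curry.continuous

section Correspondence

variable {d : ℕ} {τ T : ℝ} {h : -τ ≤ T} {b : Hist τ d → Vec d}
  {σ' : Hist τ d → Matrix (Fin d) (Fin d) ℝ} {x : Traj τ T d}

theorem velocity_of_mem_controls (hb : Continuous fun s => b (seg h x s))
    (hσ : Continuous fun s => σ' (seg h x s)) {u : ℝ → Vec d} (hu : u ∈ controls h b σ' x) :
    IntegrableOn (fun s => b (seg h x s) + matVec (σ' (seg h x s)) (u s)) (Icc 0 T) volume ∧
      ∀ t ∈ Icc (0:ℝ) T, ev h x t = ev h x 0 +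
        ∫ s in (0:ℝ)..t, (b (seg h x s) + matVec (σ' (seg h x s)) (u s)) := by
  obtain ⟨hu2, hequ⟩ := hu
  have hσu : IntegrableOn (fun s => matVec (σ' (seg h x s)) (u s)) (Icc 0 T) :=
    IntegrableOn.matVec hσ isCompact_Icc (hu2.integrable one_le_two)
  refine ⟨hb.integrableOn_Icc.add hσu, fun t ht => ?_⟩
  rw [intervalIntegral_add_of_integrableOn_Icc hb.integrableOn_Icc hσu ht, ← add_assoc]
  exact hequ t ht

theorem mem_controls_of_velocity (hb : Continuous fun s => b (seg h x s))
    (hσ : Continuous fun s => σ' (seg h x s)) (hdet : ∀ s, IsUnit (σ' (seg h x s)).det)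
    {x' : ℝ → Vec d} (hx' : IntegrableOn x' (Icc 0 T) volume ∧
      ∀ t ∈ Icc (0:ℝ) T, ev h x t = ev h x 0 + ∫ s in (0:ℝ)..t, x' s)
    (hfin : ∫⁻ s in Icc (0:ℝ) T, ENNReal.ofReal (lagrangian b σ' (seg h x s) (x' s)) ≠ ⊤) :
    (fun s => matVec (σ' (seg h x s))⁻¹ (x' s - b (seg h x s))) ∈ controls h b σ' x := by
  obtain ⟨hx'int, hequ⟩ := hx'
  have hσu : ∀ s, matVec (σ' (seg h x s)) (matVec (σ' (seg h x s))⁻¹ (x' s - b (seg h x s))) =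
      x' s - b (seg h x s) := fun s => matVec_matVec_inv (hdet s) _
  refine ⟨memLp_two_of_lintegral_half_norm_sq_ne_top
    ((hx'int.1.sub hb.aestronglyMeasurable).matVec (hσ.matrix_inv_of_isUnit_det hdet)) ?_,
    fun t ht => ?_⟩
  · simpa only [lagrangian_eq_half_norm_sq] using hfin
  · have hdiff : IntegrableOn (fun s => x' s - b (seg h x s)) (Icc 0 T) :=
      hx'int.sub hb.integrableOn_Icc
    simp only [hσu]
    rw [add_assoc, ← intervalIntegral_add_of_integrableOn_Icc hb.integrableOn_Icc hdiff ht]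
    simpa only [add_sub_cancel] using hequ t ht

end Correspondence

theorem stmt_3_general {d : ℕ} {τ : ℝ}
    (b : Hist τ d → Vec d) (σ' : Hist τ d → Matrix (Fin d) (Fin d) ℝ)
    {κ₁ : ℝ} (hlip : LipCoeff b σ' κ₁)
    {c : ℝ} (hc : 0 < c) (hell : UnifElliptic σ' c)
    {T : ℝ} (hT : 0 < T) (h : -τ ≤ T) (x : Traj τ T d) :
    rate h b σ' x = Jrate h b σ' x := by
  have hdet : ∀ s, IsUnit (σ' (seg h x s)).det := fun s => hell.isUnit_det hc _
  have hb := hlip.continuous_drift.comp (continuous_seg h x)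
  have hσ := hlip.continuous_diffusion.comp (continuous_seg h x)
  unfold rate Jrate
  apply le_antisymm
  · refine le_iInf₂ fun x' hx' => ?_
    obtain hfin | hfin := eq_or_ne
      (∫⁻ s in Icc (0:ℝ) T, ENNReal.ofReal (lagrangian b σ' (seg h x s) (x' s))) ⊤
    · exact hfin ▸ le_top
    have hu := mem_controls_of_velocity hb hσ hdet hx' hfin
    refine iInf₂_le_of_le _ hu (le_of_eq ?_)
    simp only [ofReal_half_intervalIntegral_norm_sq hT.le hu.1, lagrangian_eq_half_norm_sq]
  · refine le_iInf₂ fun u hu => ?_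
    refine iInf₂_le_of_le _ (velocity_of_mem_controls hb hσ hu) (le_of_eq ?_)
    simp only [lagrangian_add_matVec (hdet _), ofReal_half_intervalIntegral_norm_sq hT.le hu.1]

/-- Lemma 3.3: if `m = d` and `a = σσ'` is uniformly elliptic then
`I_T(x) = J_T(x)` for every `T > 0` and `x ∈ C([-τ,T],ℝ^d)`. -/
theorem stmt_3 {d : ℕ} (hd : 0 < d) {τ : ℝ} (hτ : 0 < τ)
    (b : Hist τ d → Vec d) (σ' : Hist τ d → Matrix (Fin d) (Fin d) ℝ)
    {κ₁ : ℝ} (hκ₁ : 0 < κ₁) (hlip : LipCoeff b σ' κ₁)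
    {c : ℝ} (hc : 0 < c) (hell : UnifElliptic σ' c)
    {T : ℝ} (hT : 0 < T) (h : -τ ≤ T) (x : Traj τ T d) :
    rate h b σ' x = Jrate h b σ' x :=
  stmt_3_general b σ' hlip hc hell hT h x
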